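/- With s and δ as above and E(h)(t) = s(t)² h(t) + s(t) s(-t) h(-t), the operator E is bounded on L^p(ℝ) for every 1 ≤ p < ∞, with operator norm equal to sup_{0 ≤ ξ ≤ 1} ‖A_ξ‖_{p→p}, where A_ξ is the 2×2 matrix [[ξ, √(ξ(1-ξ))],[√(ξ(1-ξ)), 1-ξ]] acting on ℓ^p(Fin 2). -/

import Mathlib

open MeasureTheory
open scoped ENNReal

/-- The 2×2 matrix `A_ξ = [[ξ, √(ξ(1-ξ))], [√(ξ(1-ξ)), 1-ξ]]`. -/
noncomputable def awwMatrix (ξ : ℝ) : Matrix (Fin 2) (Fin 2) ℝ :=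
  !![ξ, Real.sqrt (ξ * (1 - ξ)); Real.sqrt (ξ * (1 - ξ)), 1 - ξ]

/-- A 2×2 real matrix acting as a continuous linear operator on `ℓ^p(Fin 2)`. -/
noncomputable def matrixOpLp (p : ℝ≥0∞) [Fact (1 ≤ p)] (A : Matrix (Fin 2) (Fin 2) ℝ) :
    PiLp p (fun _ : Fin 2 => ℝ) →L[ℝ] PiLp p (fun _ : Fin 2 => ℝ) :=
  LinearMap.toContinuousLinearMap
    (((WithLp.linearEquiv p ℝ (Fin 2 → ℝ)).symm.toLinearMap.comp
      (Matrix.toLin' A)).comp (WithLp.linearEquiv p ℝ (Fin 2 → ℝ)).toLinearMap)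

namespace AWW

variable {p : ℝ≥0∞} [Fact (1 ≤ p)]

lemma q_pos (hp : p ≠ ∞) : 0 < p.toReal :=
  ENNReal.toReal_pos (zero_lt_one.trans_le (Fact.out : 1 ≤ p)).ne' hp

lemma one_le_q (hp : p ≠ ∞) : 1 ≤ p.toReal := by
  have h1 : (1:ℝ≥0∞) ≠ ∞ := by simp
  have := ENNReal.toReal_mono hp (Fact.out : 1 ≤ p)
  simpa using this

lemma piLp_norm (hp : p ≠ ∞) (w : PiLp p (fun _ : Fin 2 => ℝ)) :
    ‖w‖ = (|w 0| ^ p.toReal + |w 1| ^ p.toReal) ^ (1/p.toReal) := by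
  rw [PiLp.norm_eq_sum (q_pos hp), Fin.sum_univ_two]; simp [Real.norm_eq_abs]

lemma piLp_norm_rpow (hp : p ≠ ∞) (w : PiLp p (fun _ : Fin 2 => ℝ)) :
    ‖w‖ ^ p.toReal = |w 0| ^ p.toReal + |w 1| ^ p.toReal := by
  rw [piLp_norm hp w, one_div, Real.rpow_inv_rpow (by positivity) (q_pos hp).ne']

lemma coord_le_norm (hp : p ≠ ∞) (w : PiLp p (fun _ : Fin 2 => ℝ)) (i : Fin 2) :
    |w i| ≤ ‖w‖ := by
  have h0 : |w i| ^ p.toReal ≤ ‖w‖ ^ p.toReal := by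
    rw [piLp_norm_rpow hp w]
    have hi : i = 0 ∨ i = 1 := by omega
    rcases hi with rfl | rfl <;>
      nlinarith [Real.rpow_nonneg (abs_nonneg (w 0)) p.toReal,
        Real.rpow_nonneg (abs_nonneg (w 1)) p.toReal]
  exact (Real.rpow_le_rpow_iff (abs_nonneg (w i)) (norm_nonneg w) (q_pos hp)).1 h0

lemma mulVec_apply (A : Matrix (Fin 2) (Fin 2) ℝ) (x y : ℝ) :
    A.mulVec ![x, y] = ![A 0 0 * x + A 0 1 * y, A 1 0 * x + A 1 1 * y] := by
  funext i; fin_cases i <;> simp [Matrix.mulVec, dotProduct, Fin.sum_univ_two]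

lemma matrixOpLp_apply (A : Matrix (Fin 2) (Fin 2) ℝ) (v : PiLp p (fun _ : Fin 2 => ℝ))
    (i : Fin 2) : matrixOpLp p A v i = A.mulVec (fun j => v j) i := rfl


/-- The supremum of matrix norms. -/
noncomputable def awwSup (p : ℝ≥0∞) [Fact (1 ≤ p)] : ℝ :=
  ⨆ ξ : Set.Icc (0:ℝ) 1, ‖matrixOpLp p (awwMatrix ξ.1)‖

lemma norm_matrixOpLp_le (hp : p ≠ ∞) {ξ : ℝ} (hξ : ξ ∈ Set.Icc (0:ℝ) 1) :
    ‖matrixOpLp p (awwMatrix ξ)‖ ≤ 8 := by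
  apply ContinuousLinearMap.opNorm_le_bound _ (by norm_num)
  intro v
  have hent : ∀ i j, |awwMatrix ξ i j| ≤ 1 := by
    have h1 : Real.sqrt (ξ * (1 - ξ)) ≤ 1 :=
      le_trans (Real.sqrt_le_sqrt (by nlinarith [hξ.1, hξ.2] : ξ * (1 - ξ) ≤ 1))
        (by rw [Real.sqrt_one])
    have h2 : (0:ℝ) ≤ Real.sqrt (ξ * (1 - ξ)) := Real.sqrt_nonneg _
    intro i j
    fin_cases i <;> fin_cases j <;>
      simp [awwMatrix, abs_le] <;> constructor <;> nlinarith [hξ.1, hξ.2]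
  have hrow : ∀ i, |matrixOpLp p (awwMatrix ξ) v i| ≤ 2 * ‖v‖ := by
    intro i
    rw [matrixOpLp_apply]
    have : (awwMatrix ξ).mulVec (fun j => v j) i
        = awwMatrix ξ i 0 * v 0 + awwMatrix ξ i 1 * v 1 := by
      simp [Matrix.mulVec, dotProduct, Fin.sum_univ_two]
    rw [this]
    calc |awwMatrix ξ i 0 * v 0 + awwMatrix ξ i 1 * v 1|
        ≤ |awwMatrix ξ i 0 * v 0| + |awwMatrix ξ i 1 * v 1| := abs_add_le _ _
      _ = |awwMatrix ξ i 0| * |v 0| + |awwMatrix ξ i 1| * |v 1| := by rw [abs_mul, abs_mul]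
      _ ≤ 1 * ‖v‖ + 1 * ‖v‖ := by
          gcongr <;> [exact hent i 0; exact coord_le_norm hp v 0;
            exact hent i 1; exact coord_le_norm hp v 1]
      _ = 2 * ‖v‖ := by ring
  set w := matrixOpLp p (awwMatrix ξ) v with hw
  have hq := q_pos hp
  have : ‖w‖ ^ p.toReal ≤ 2 * (2 * ‖v‖) ^ p.toReal := by
    rw [piLp_norm_rpow hp w]
    have h0 := Real.rpow_le_rpow (abs_nonneg _) (hrow 0) hq.le
    have h1 := Real.rpow_le_rpow (abs_nonneg _) (hrow 1) hq.le
    linarith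
  calc ‖w‖ = (‖w‖ ^ p.toReal) ^ (1/p.toReal) := by
        rw [one_div, Real.rpow_rpow_inv (norm_nonneg _) hq.ne']
    _ ≤ (2 * (2 * ‖v‖) ^ p.toReal) ^ (1/p.toReal) := by
        apply Real.rpow_le_rpow (by positivity) this (by positivity)
    _ = 2 ^ (1/p.toReal) * (2 * ‖v‖) := by
        rw [Real.mul_rpow (by norm_num) (by positivity), one_div,
          Real.rpow_rpow_inv (by positivity) hq.ne']
    _ ≤ 2 ^ (1:ℝ) * (2 * ‖v‖) := by
        gcongr
        · norm_num
        · rw [div_le_one hq]; exact one_le_q hp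
    _ = 8 * ‖v‖ / 2 := by norm_num; ring
    _ ≤ 8 * ‖v‖ := by nlinarith [norm_nonneg v]

lemma le_awwSup (hp : p ≠ ∞) {ξ : ℝ} (hξ : ξ ∈ Set.Icc (0:ℝ) 1) :
    ‖matrixOpLp p (awwMatrix ξ)‖ ≤ awwSup p := by
  haveI : Nonempty (Set.Icc (0:ℝ) 1) := ⟨⟨0, by norm_num⟩⟩
  exact le_ciSup_of_le (by exact ⟨8, by rintro x ⟨ζ, rfl⟩; exact norm_matrixOpLp_le hp ζ.2⟩)
    ⟨ξ, hξ⟩ le_rfl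

lemma awwSup_nonneg (hp : p ≠ ∞) : 0 ≤ awwSup p :=
  le_trans (norm_nonneg _) (le_awwSup hp ⟨le_refl 0, zero_le_one⟩)


variable {s : ℝ → ℝ}

lemma sqrt_eq (hrange : ∀ t, s t ∈ Set.Icc (0:ℝ) 1) (hsq : ∀ t, s t ^ 2 + s (-t) ^ 2 = 1)
    (t : ℝ) : Real.sqrt (s t ^ 2 * (1 - s t ^ 2)) = s t * s (-t) := by
  have h1 : 1 - s t ^ 2 = s (-t) ^ 2 := by have := hsq t; linarith
  rw [h1, show s t ^ 2 * s (-t) ^ 2 = (s t * s (-t)) ^ 2 by ring,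
    Real.sqrt_sq (mul_nonneg (hrange t).1 (hrange (-t)).1)]

lemma xi_mem (hsq : ∀ t, s t ^ 2 + s (-t) ^ 2 = 1) (t : ℝ) :
    s t ^ 2 ∈ Set.Icc (0:ℝ) 1 :=
  ⟨sq_nonneg _, by nlinarith [hsq t, sq_nonneg (s (-t))]⟩

lemma w_coords (ξ x y : ℝ) :
    (matrixOpLp p (awwMatrix ξ) ((WithLp.equiv p (Fin 2 → ℝ)).symm ![x, y]) 0
      = ξ * x + Real.sqrt (ξ * (1 - ξ)) * y) ∧
    (matrixOpLp p (awwMatrix ξ) ((WithLp.equiv p (Fin 2 → ℝ)).symm ![x, y]) 1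
      = Real.sqrt (ξ * (1 - ξ)) * x + (1 - ξ) * y) := by
  constructor <;>
  · rw [matrixOpLp_apply]
    show (awwMatrix ξ).mulVec ![x, y] _ = _
    rw [mulVec_apply]
    simp [awwMatrix]

lemma key_pointwise (hp : p ≠ ∞) (hrange : ∀ t, s t ∈ Set.Icc (0:ℝ) 1)
    (hsq : ∀ t, s t ^ 2 + s (-t) ^ 2 = 1) (t x y : ℝ) :
    |s t ^ 2 * x + s t * s (-t) * y| ^ p.toReal
      + |s (-t) ^ 2 * y + s (-t) * s t * x| ^ p.toReal
    ≤ awwSup p ^ p.toReal * (|x| ^ p.toReal + |y| ^ p.toReal) := by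
  set ξ := s t ^ 2 with hxi
  have h1 : 1 - ξ = s (-t) ^ 2 := by have := hsq t; rw [hxi]; linarith
  set v := (WithLp.equiv p (Fin 2 → ℝ)).symm ![x, y] with hv
  set w := matrixOpLp p (awwMatrix ξ) v with hwdef
  have hw0 : w 0 = s t ^ 2 * x + s t * s (-t) * y := by
    rw [hwdef, hv, (w_coords ξ x y).1, sqrt_eq hrange hsq t]
  have hw1 : w 1 = s (-t) ^ 2 * y + s (-t) * s t * x := by
    rw [hwdef, hv, (w_coords ξ x y).2, sqrt_eq hrange hsq t, ← h1]; ring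
  have hv0 : v 0 = x := rfl
  have hv1 : v 1 = y := rfl
  have hn : ‖w‖ ≤ awwSup p * ‖v‖ :=
    le_trans ((matrixOpLp p (awwMatrix ξ)).le_opNorm v)
      (mul_le_mul_of_nonneg_right (le_awwSup hp (xi_mem hsq t)) (norm_nonneg v))
  calc |s t ^ 2 * x + s t * s (-t) * y| ^ p.toReal
        + |s (-t) ^ 2 * y + s (-t) * s t * x| ^ p.toReal
      = ‖w‖ ^ p.toReal := by rw [piLp_norm_rpow hp w, hw0, hw1]
    _ ≤ (awwSup p * ‖v‖) ^ p.toReal :=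
        Real.rpow_le_rpow (norm_nonneg w) hn (q_pos hp).le
    _ = awwSup p ^ p.toReal * ‖v‖ ^ p.toReal :=
        Real.mul_rpow (awwSup_nonneg hp) (norm_nonneg v)
    _ = awwSup p ^ p.toReal * (|x| ^ p.toReal + |y| ^ p.toReal) := by
        rw [piLp_norm_rpow hp v, hv0, hv1]


/-- The AWW operator on functions. -/
noncomputable def awwT (s f : ℝ → ℝ) : ℝ → ℝ :=
  fun t => s t ^ 2 * f t + s t * s (-t) * f (-t)

lemma neg_mp : MeasurePreserving (fun t : ℝ => -t) volume volume :=
  Measure.measurePreserving_neg _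

lemma awwT_aemeasurable (hs : Continuous s) {f : ℝ → ℝ} (hf : AEMeasurable f volume) :
    AEMeasurable (awwT s f) volume := by
  have hneg : AEMeasurable (fun t => f (-t)) volume :=
    hf.comp_quasiMeasurePreserving neg_mp.quasiMeasurePreserving
  exact (((hs.measurable.pow_const 2).aemeasurable.mul hf).add
    ((hs.measurable.mul (hs.measurable.comp measurable_neg)).aemeasurable.mul hneg))

lemma lintegral_neg_eq (F : ℝ → ℝ≥0∞) (hF : AEMeasurable F volume) :
    ∫⁻ t, F (-t) = ∫⁻ t, F t := by
  calc ∫⁻ t, F (-t) ∂volume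
      = ∫⁻ t, F t ∂(Measure.map (fun t : ℝ => -t) volume) :=
        (lintegral_map' (by rwa [neg_mp.map_eq]) measurable_neg.aemeasurable).symm
    _ = ∫⁻ t, F t ∂volume := by rw [neg_mp.map_eq]

lemma ennnorm_rpow (a : ℝ) (hq : 0 ≤ p.toReal) :
    (‖a‖₊ : ℝ≥0∞) ^ p.toReal = ENNReal.ofReal (|a| ^ p.toReal) := by
  rw [← enorm_eq_nnnorm, Real.enorm_eq_ofReal_abs, ENNReal.ofReal_rpow_of_nonneg (abs_nonneg a) hq]

lemma eLpNorm_awwT_le (hp : p ≠ ∞) (hs : Continuous s)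
    (hrange : ∀ t, s t ∈ Set.Icc (0:ℝ) 1) (hsq : ∀ t, s t ^ 2 + s (-t) ^ 2 = 1)
    {f : ℝ → ℝ} (hf : AEMeasurable f volume) :
    eLpNorm (awwT s f) p volume ≤ ENNReal.ofReal (awwSup p) * eLpNorm f p volume := by
  have hp0 : p ≠ 0 := (zero_lt_one.trans_le (Fact.out : 1 ≤ p)).ne'
  have hq : 0 < p.toReal := q_pos hp
  set q := p.toReal with hqdef
  set G : ℝ → ℝ≥0∞ := fun t => ENNReal.ofReal (|awwT s f t| ^ q) with hG
  set H : ℝ → ℝ≥0∞ := fun t => ENNReal.ofReal (|f t| ^ q) with hH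
  have hGm : AEMeasurable G volume :=
    (((continuous_abs.measurable.comp_aemeasurable
      (awwT_aemeasurable hs hf))).pow_const q).ennreal_ofReal
  have hHm : AEMeasurable H volume :=
    ((continuous_abs.measurable.comp_aemeasurable hf).pow_const q).ennreal_ofReal
  have hpt : ∀ t, G t + G (-t)
      ≤ ENNReal.ofReal (awwSup p ^ q) * (H t + H (-t)) := by
    intro t
    have hk := key_pointwise hp hrange hsq t (f t) (f (-t))
    have e1 : awwT s f t = s t ^ 2 * f t + s t * s (-t) * f (-t) := rfl
    have e2 : awwT s f (-t) = s (-t) ^ 2 * f (-t) + s (-t) * s t * f t := by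
      simp only [awwT, neg_neg]
    have hGt : ∀ u, G u = ENNReal.ofReal (|awwT s f u| ^ q) := fun u => rfl
    calc G t + G (-t)
        = ENNReal.ofReal (|s t ^ 2 * f t + s t * s (-t) * f (-t)| ^ q
            + |s (-t) ^ 2 * f (-t) + s (-t) * s t * f t| ^ q) := by
          rw [hGt t, hGt (-t), e1, e2, ENNReal.ofReal_add (by positivity) (by positivity)]
      _ ≤ ENNReal.ofReal (awwSup p ^ q * (|f t| ^ q + |f (-t)| ^ q)) :=
          ENNReal.ofReal_le_ofReal hk
      _ = ENNReal.ofReal (awwSup p ^ q) * (H t + H (-t)) := by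
          rw [ENNReal.ofReal_mul (Real.rpow_nonneg (awwSup_nonneg hp) _),
            ENNReal.ofReal_add (by positivity) (by positivity)]
  have h2 : (2:ℝ≥0∞) * ∫⁻ t, G t
      ≤ ENNReal.ofReal (awwSup p ^ q) * ((2:ℝ≥0∞) * ∫⁻ t, H t) := by
    have hGsum : ∫⁻ t, (G t + G (-t)) = (∫⁻ t, G t) + ∫⁻ t, G t := by
      rw [lintegral_add_left' hGm, lintegral_neg_eq G hGm]
    have hHsum : ∫⁻ t, (ENNReal.ofReal (awwSup p ^ q) * (H t + H (-t)))
        = ENNReal.ofReal (awwSup p ^ q) * ((∫⁻ t, H t) + ∫⁻ t, H t) := by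
      rw [lintegral_const_mul' _ _ ENNReal.ofReal_ne_top,
        lintegral_add_left' hHm, lintegral_neg_eq H hHm]
    calc (2:ℝ≥0∞) * ∫⁻ t, G t = ∫⁻ t, (G t + G (-t)) := by rw [hGsum, two_mul]
      _ ≤ ∫⁻ t, (ENNReal.ofReal (awwSup p ^ q) * (H t + H (-t))) :=
          lintegral_mono hpt
      _ = ENNReal.ofReal (awwSup p ^ q) * ((2:ℝ≥0∞) * ∫⁻ t, H t) := by
          rw [hHsum, two_mul]
  rw [show ENNReal.ofReal (awwSup p ^ q) * ((2:ℝ≥0∞) * ∫⁻ t, H t)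
      = (2:ℝ≥0∞) * (ENNReal.ofReal (awwSup p ^ q) * ∫⁻ t, H t) by ring] at h2
  have hGH : ∫⁻ t, G t ≤ ENNReal.ofReal (awwSup p ^ q) * ∫⁻ t, H t :=
    (ENNReal.mul_le_mul_iff_right two_ne_zero ENNReal.ofNat_ne_top).1 h2
  rw [eLpNorm_eq_lintegral_rpow_enorm_toReal hp0 hp, eLpNorm_eq_lintegral_rpow_enorm_toReal hp0 hp]
  simp only [enorm_eq_nnnorm]
  have hGeq : ∫⁻ t, (‖awwT s f t‖₊ : ℝ≥0∞) ^ q = ∫⁻ t, G t := by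
    congr 1; funext t; exact ennnorm_rpow _ hq.le
  have hHeq : ∫⁻ t, (‖f t‖₊ : ℝ≥0∞) ^ q = ∫⁻ t, H t := by
    congr 1; funext t; exact ennnorm_rpow _ hq.le
  rw [hGeq, hHeq]
  calc (∫⁻ t, G t) ^ (1/q) ≤ (ENNReal.ofReal (awwSup p ^ q) * ∫⁻ t, H t) ^ (1/q) :=
        ENNReal.rpow_le_rpow hGH (by positivity)
    _ = ENNReal.ofReal (awwSup p) * (∫⁻ t, H t) ^ (1/q) := by
        rw [ENNReal.mul_rpow_of_nonneg _ _ (by positivity),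
          ← ENNReal.ofReal_rpow_of_nonneg (awwSup_nonneg hp) hq.le, one_div,
          ← ENNReal.rpow_mul, mul_inv_cancel₀ hq.ne', ENNReal.rpow_one]

lemma awwT_memℒp (hp : p ≠ ∞) (hs : Continuous s)
    (hrange : ∀ t, s t ∈ Set.Icc (0:ℝ) 1) (hsq : ∀ t, s t ^ 2 + s (-t) ^ 2 = 1)
    {f : ℝ → ℝ} (hf : MemLp f p volume) : MemLp (awwT s f) p volume := by
  refine ⟨(awwT_aemeasurable hs hf.aestronglyMeasurable.aemeasurable).aestronglyMeasurable, ?_⟩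
  calc eLpNorm (awwT s f) p volume
      ≤ ENNReal.ofReal (awwSup p) * eLpNorm f p volume :=
        eLpNorm_awwT_le hp hs hrange hsq hf.aestronglyMeasurable.aemeasurable
    _ < ∞ := ENNReal.mul_lt_top ENNReal.ofReal_lt_top hf.2

lemma awwT_congr {f g : ℝ → ℝ} (hfg : f =ᵐ[volume] g) :
    awwT s f =ᵐ[volume] awwT s g := by
  have hneg : (fun t => f (-t)) =ᵐ[volume] fun t => g (-t) :=
    neg_mp.quasiMeasurePreserving.ae_eq_comp hfg
  filter_upwards [hfg, hneg] with t h1 h2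
  simp only [awwT, h1, h2]


lemma awwT_add (s f g : ℝ → ℝ) : awwT s (f + g) = awwT s f + awwT s g := by
  funext t; simp only [awwT, Pi.add_apply]; ring

lemma awwT_smul (s : ℝ → ℝ) (c : ℝ) (f : ℝ → ℝ) : awwT s (c • f) = c • awwT s f := by
  funext t; simp only [awwT, Pi.smul_apply, smul_eq_mul]; ring

/-- The AWW operator as a continuous linear map on `L^p`. -/
noncomputable def awwE (hp : p ≠ ∞) (hs : Continuous s)
    (hrange : ∀ t, s t ∈ Set.Icc (0:ℝ) 1) (hsq : ∀ t, s t ^ 2 + s (-t) ^ 2 = 1) :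
    Lp ℝ p (volume : Measure ℝ) →L[ℝ] Lp ℝ p (volume : Measure ℝ) :=
  LinearMap.mkContinuous
    { toFun := fun f => (awwT_memℒp hp hs hrange hsq (Lp.memLp f)).toLp (awwT s ⇑f)
      map_add' := by
        intro f g
        rw [← MemLp.toLp_add]
        refine MemLp.toLp_congr _ _ ?_
        refine (awwT_congr (Lp.coeFn_add f g)).trans ?_
        rw [awwT_add]
      map_smul' := by
        intro c f
        simp only [RingHom.id_apply]
        rw [← MemLp.toLp_const_smul]
        refine MemLp.toLp_congr _ _ ?_
        refine (awwT_congr (Lp.coeFn_smul c f)).trans ?_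
        rw [awwT_smul] }
    (awwSup p)
    (by
      intro f
      simp only [LinearMap.coe_mk, AddHom.coe_mk]
      rw [Lp.norm_toLp, Lp.norm_def]
      have hle := eLpNorm_awwT_le hp hs hrange hsq
        (Lp.memLp f).aestronglyMeasurable.aemeasurable
      have hne : ENNReal.ofReal (awwSup p) * eLpNorm (⇑f) p volume ≠ ∞ :=
        (ENNReal.mul_lt_top ENNReal.ofReal_lt_top (Lp.memLp f).2).ne
      calc (eLpNorm (awwT s ⇑f) p volume).toReal
          ≤ (ENNReal.ofReal (awwSup p) * eLpNorm (⇑f) p volume).toReal :=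
            ENNReal.toReal_mono hne hle
        _ = awwSup p * (eLpNorm (⇑f) p volume).toReal := by
            rw [ENNReal.toReal_mul, ENNReal.toReal_ofReal (awwSup_nonneg hp)])

lemma awwE_coe (hp : p ≠ ∞) (hs : Continuous s)
    (hrange : ∀ t, s t ∈ Set.Icc (0:ℝ) 1) (hsq : ∀ t, s t ^ 2 + s (-t) ^ 2 = 1)
    (f : Lp ℝ p (volume : Measure ℝ)) :
    ⇑(awwE hp hs hrange hsq f) =ᵐ[volume] awwT s ⇑f :=
  MemLp.coeFn_toLp (awwT_memℒp hp hs hrange hsq (Lp.memLp f))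

lemma awwE_norm_le (hp : p ≠ ∞) (hs : Continuous s)
    (hrange : ∀ t, s t ∈ Set.Icc (0:ℝ) 1) (hsq : ∀ t, s t ^ 2 + s (-t) ^ 2 = 1) :
    ‖awwE hp hs hrange hsq‖ ≤ awwSup p :=
  LinearMap.mkContinuous_norm_le _ (awwSup_nonneg hp) _


lemma mulVec_coords (A : Matrix (Fin 2) (Fin 2) ℝ) (v : PiLp p (fun _ : Fin 2 => ℝ))
    (i : Fin 2) : matrixOpLp p A v i = A i 0 * v 0 + A i 1 * v 1 := by
  rw [matrixOpLp_apply]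
  simp [Matrix.mulVec, dotProduct, Fin.sum_univ_two]

set_option maxHeartbeats 1000000 in
lemma lower_bound (hp : p ≠ ∞) {δ : ℝ} (hδ : 0 < δ) (hs : Continuous s)
    (hrange : ∀ t, s t ∈ Set.Icc (0:ℝ) 1) (hsupp : ∀ t ≤ -δ, s t = 0)
    (hsq : ∀ t, s t ^ 2 + s (-t) ^ 2 = 1)
    (E : Lp ℝ p (volume : Measure ℝ) →L[ℝ] Lp ℝ p (volume : Measure ℝ))
    (hE : ∀ f : Lp ℝ p (volume : Measure ℝ), ⇑(E f) =ᵐ[volume] awwT s ⇑f)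
    {ξ : ℝ} (hξ : ξ ∈ Set.Icc (0:ℝ) 1) :
    ‖matrixOpLp p (awwMatrix ξ)‖ ≤ ‖E‖ := by
  by_contra hcon
  push_neg at hcon
  obtain ⟨r, hr1, hr2⟩ := exists_between hcon
  have hr0 : 0 < r := lt_of_le_of_lt (norm_nonneg E) hr1
  have hp0 : p ≠ 0 := (zero_lt_one.trans_le (Fact.out : 1 ≤ p)).ne'
  have hq : 0 < p.toReal := q_pos hp
  set q := p.toReal with hqdef
  obtain ⟨v, hv1, hrv⟩ := (matrixOpLp p (awwMatrix ξ)).exists_lt_apply_of_lt_opNorm hr2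
  set w := matrixOpLp p (awwMatrix ξ) v with hwdef
  set a := v 0 with ha
  set b := v 1 with hb
  -- find t₀ with s t₀ ^ 2 = ξ
  have hsd : s δ ^ 2 = 1 := by
    have h1 := hsq δ
    have h2 : s (-δ) = 0 := hsupp _ le_rfl
    rw [h2] at h1; nlinarith
  have hIVT := intermediate_value_Icc (by linarith : -δ ≤ δ)
    ((hs.pow 2).continuousOn : ContinuousOn (fun t => s t ^ 2) (Set.Icc (-δ) δ))
  have hmemI : ξ ∈ Set.Icc ((fun t => s t ^ 2) (-δ)) ((fun t => s t ^ 2) δ) := by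
    simp only [hsupp (-δ) le_rfl, hsd]
    simpa using hξ
  obtain ⟨t₀, -, ht₀⟩ := hIVT hmemI
  simp only [Pi.pow_apply] at ht₀
  -- identities at t₀
  have h1ξ : s (-t₀) ^ 2 = 1 - ξ := by have := hsq t₀; rw [ht₀] at this; linarith
  have hsx : Real.sqrt (ξ * (1 - ξ)) = s t₀ * s (-t₀) := by
    have := sqrt_eq hrange hsq t₀
    rwa [ht₀] at this
  have hw0 : w 0 = s t₀ ^ 2 * a + s t₀ * s (-t₀) * b := by
    rw [hwdef, mulVec_coords, ← ha, ← hb, show awwMatrix ξ 0 0 = ξ by simp [awwMatrix],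
      show awwMatrix ξ 0 1 = Real.sqrt (ξ * (1 - ξ)) by simp [awwMatrix], hsx, ht₀]
  have hw1 : w 1 = s (-t₀) ^ 2 * b + s (-t₀) * s t₀ * a := by
    rw [hwdef, mulVec_coords, ← ha, ← hb, show awwMatrix ξ 1 0 = Real.sqrt (ξ * (1 - ξ)) by
      simp [awwMatrix], show awwMatrix ξ 1 1 = 1 - ξ by simp [awwMatrix], hsx, h1ξ]
    ring
  set c0 := |w 0| ^ q with hc0
  set c1 := |w 1| ^ q with hc1
  have hcc : c0 + c1 = ‖w‖ ^ q := (piLp_norm_rpow hp w).symm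
  have hrq : r ^ q < c0 + c1 := by
    rw [hcc]; exact Real.rpow_lt_rpow hr0.le hrv hq
  set ε := (c0 + c1 - r ^ q) / 2 with hε
  have hεpos : 0 < ε := by rw [hε]; linarith
  -- continuity
  set φ₁ : ℝ → ℝ := fun t => |s t ^ 2 * a + s t * s (-t) * b| ^ q with hφ₁def
  set φ₂ : ℝ → ℝ := fun t => |s t ^ 2 * b + s t * s (-t) * a| ^ q with hφ₂def
  have hφ₁c : Continuous φ₁ := by
    apply Continuous.rpow_const
    · exact (((hs.pow 2).mul continuous_const).add
        ((hs.mul (hs.comp continuous_neg)).mul continuous_const)).abs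
    · exact fun _ => Or.inr hq.le
  have hφ₂c : Continuous φ₂ := by
    apply Continuous.rpow_const
    · exact (((hs.pow 2).mul continuous_const).add
        ((hs.mul (hs.comp continuous_neg)).mul continuous_const)).abs
    · exact fun _ => Or.inr hq.le
  have hφ₁t₀ : φ₁ t₀ = c0 := by rw [hφ₁def, hc0, hw0]
  have hφ₂t₀ : φ₂ (-t₀) = c1 := by
    rw [hφ₂def, hc1, hw1]; simp only [neg_neg]
  obtain ⟨η₁, hη₁pos, hη₁⟩ := Metric.continuousAt_iff.1 (hφ₁c.continuousAt (x := t₀)) ε hεpos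
  obtain ⟨η₂, hη₂pos, hη₂⟩ := Metric.continuousAt_iff.1 (hφ₂c.continuousAt (x := -t₀)) ε hεpos
  set η := min (min η₁ η₂) (if t₀ < 0 then -t₀ else 1) with hηdef
  have hηpos : 0 < η := by
    rw [hηdef]
    apply lt_min (lt_min hη₁pos hη₂pos)
    split_ifs with hcase; · linarith
    · norm_num
  have hηle₁ : η ≤ η₁ := le_trans (min_le_left _ _) (min_le_left _ _)
  have hηle₂ : η ≤ η₂ := le_trans (min_le_left _ _) (min_le_right _ _)
  set J₁ := Set.Ioo t₀ (t₀ + η) with hJ₁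
  set J₂ := Set.Ioo (-(t₀ + η)) (-t₀) with hJ₂
  have hdisj : Disjoint J₁ J₂ := by
    rw [Set.disjoint_left]
    rintro t ⟨ht1, ht2⟩ ⟨ht3, ht4⟩
    by_cases hcase : t₀ < 0
    · have hη0 : η ≤ -t₀ := by
        rw [hηdef]; refine le_trans (min_le_right _ _) ?_; rw [if_pos hcase]
      linarith
    · push_neg at hcase; linarith
  have hrefl₁ : ∀ t, -t ∈ J₁ ↔ t ∈ J₂ := by
    intro t; rw [hJ₁, hJ₂]
    simp only [Set.mem_Ioo]
    constructor <;> rintro ⟨u1, u2⟩ <;> constructor <;> linarith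
  have hrefl₂ : ∀ t, -t ∈ J₂ ↔ t ∈ J₁ := by
    intro t; rw [hJ₁, hJ₂]
    simp only [Set.mem_Ioo]
    constructor <;> rintro ⟨u1, u2⟩ <;> constructor <;> linarith
  -- the test function
  set h : ℝ → ℝ := J₁.indicator (fun _ => a) + J₂.indicator (fun _ => b) with hhdef
  have hmem : MemLp h p volume := by
    refine MemLp.add ?_ ?_
    · exact memLp_indicator_const p measurableSet_Ioo a (Or.inr measure_Ioo_lt_top.ne)
    · exact memLp_indicator_const p measurableSet_Ioo b (Or.inr measure_Ioo_lt_top.ne)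
  have hha : ∀ t ∈ J₁, h t = a := by
    intro t ht
    rw [hhdef]
    simp only [Pi.add_apply]
    rw [Set.indicator_of_mem ht, Set.indicator_of_notMem (Set.disjoint_left.1 hdisj ht)]
    ring
  have hhb : ∀ t ∈ J₂, h t = b := by
    intro t ht
    rw [hhdef]
    simp only [Pi.add_apply]
    rw [Set.indicator_of_mem ht, Set.indicator_of_notMem (Set.disjoint_right.1 hdisj ht)]
    ring
  have hT1 : ∀ t ∈ J₁, awwT s h t = s t ^ 2 * a + s t * s (-t) * b := by
    intro t ht
    have h1 : h (-t) = b := hhb (-t) ((hrefl₂ t).2 ht)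
    simp only [awwT]
    rw [hha t ht, h1]
  have hT2 : ∀ t ∈ J₂, awwT s h t = s t ^ 2 * b + s t * s (-t) * a := by
    intro t ht
    have h1 : h (-t) = a := hha (-t) ((hrefl₁ t).2 ht)
    simp only [awwT]
    rw [hhb t ht, h1]
  -- lower bound for the integral
  set ψ : ℝ → ℝ≥0∞ := fun t => J₁.indicator (fun _ => ENNReal.ofReal (c0 - ε)) t
    + J₂.indicator (fun _ => ENNReal.ofReal (c1 - ε)) t with hψdef
  have hψle : ∀ t, ψ t ≤ (‖awwT s h t‖₊ : ℝ≥0∞) ^ q := by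
    intro t
    rw [ennnorm_rpow _ hq.le]
    by_cases ht1 : t ∈ J₁
    · have hd : dist t t₀ < η₁ := by
        rw [Real.dist_eq, abs_sub_lt_iff]
        obtain ⟨u1, u2⟩ := ht1
        constructor <;> linarith [hηle₁]
      have hcont := hη₁ hd
      rw [Real.dist_eq, hφ₁t₀, abs_sub_lt_iff] at hcont
      have hlow : c0 - ε ≤ |awwT s h t| ^ q := by
        rw [hT1 t ht1]
        have heq : φ₁ t = |s t ^ 2 * a + s t * s (-t) * b| ^ q := rfl
        linarith [hcont.2]
      rw [hψdef]
      simp only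
      rw [Set.indicator_of_mem ht1, Set.indicator_of_notMem (Set.disjoint_left.1 hdisj ht1),
        add_zero]
      exact ENNReal.ofReal_le_ofReal hlow
    · by_cases ht2 : t ∈ J₂
      · have hd : dist t (-t₀) < η₂ := by
          rw [Real.dist_eq, abs_sub_lt_iff]
          obtain ⟨u1, u2⟩ := ht2
          constructor <;> linarith [hηle₂]
        have hcont := hη₂ hd
        rw [Real.dist_eq, hφ₂t₀, abs_sub_lt_iff] at hcont
        have hlow : c1 - ε ≤ |awwT s h t| ^ q := by
          rw [hT2 t ht2]
          have heq : φ₂ t = |s t ^ 2 * b + s t * s (-t) * a| ^ q := rfl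
          linarith [hcont.2]
        rw [hψdef]
        simp only
        rw [Set.indicator_of_notMem ht1, Set.indicator_of_mem ht2, zero_add]
        exact ENNReal.ofReal_le_ofReal hlow
      · rw [hψdef]
        simp only
        rw [Set.indicator_of_notMem ht1, Set.indicator_of_notMem ht2, add_zero]
        exact zero_le
  have hvolJ₁ : volume J₁ = ENNReal.ofReal η := by
    rw [hJ₁, Real.volume_Ioo]; congr 1; ring
  have hvolJ₂ : volume J₂ = ENNReal.ofReal η := by
    rw [hJ₂, Real.volume_Ioo]; congr 1; ring
  have hψint : ∫⁻ t, ψ t = (ENNReal.ofReal (c0 - ε) + ENNReal.ofReal (c1 - ε))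
      * ENNReal.ofReal η := by
    rw [hψdef]
    rw [lintegral_add_left (Measurable.indicator measurable_const measurableSet_Ioo) _,
      lintegral_indicator measurableSet_Ioo, lintegral_indicator measurableSet_Ioo,
      setLIntegral_const, setLIntegral_const, hvolJ₁, hvolJ₂]
    ring
  have hintlow : ENNReal.ofReal (r ^ q * η) ≤ ∫⁻ t, (‖awwT s h t‖₊ : ℝ≥0∞) ^ q := by
    calc ENNReal.ofReal (r ^ q * η) = ENNReal.ofReal (r ^ q) * ENNReal.ofReal η := by
          rw [ENNReal.ofReal_mul (by positivity)]
      _ ≤ (ENNReal.ofReal (c0 - ε) + ENNReal.ofReal (c1 - ε)) * ENNReal.ofReal η := by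
          gcongr
          calc ENNReal.ofReal (r ^ q) = ENNReal.ofReal ((c0 - ε) + (c1 - ε)) := by
                congr 1; rw [hε]; ring
            _ ≤ _ := ENNReal.ofReal_add_le
      _ = ∫⁻ t, ψ t := hψint.symm
      _ ≤ _ := lintegral_mono hψle
  -- upper bound for ‖h‖
  have hnormh : eLpNorm h p volume ≤ ENNReal.ofReal η ^ (1/q) := by
    rw [eLpNorm_eq_lintegral_rpow_enorm_toReal hp0 hp]
    simp only [enorm_eq_nnnorm]
    have hpt : ∀ t, (‖h t‖₊ : ℝ≥0∞) ^ q
        = J₁.indicator (fun _ => ENNReal.ofReal (|a| ^ q)) t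
          + J₂.indicator (fun _ => ENNReal.ofReal (|b| ^ q)) t := by
      intro t
      rw [ennnorm_rpow _ hq.le]
      by_cases ht1 : t ∈ J₁
      · rw [Set.indicator_of_mem ht1,
          Set.indicator_of_notMem (Set.disjoint_left.1 hdisj ht1), add_zero, hha t ht1]
      · by_cases ht2 : t ∈ J₂
        · rw [Set.indicator_of_notMem ht1, Set.indicator_of_mem ht2, zero_add, hhb t ht2]
        · have hzero : h t = 0 := by
            rw [hhdef]
            simp only [Pi.add_apply]
            rw [Set.indicator_of_notMem ht1, Set.indicator_of_notMem ht2, add_zero]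
          rw [Set.indicator_of_notMem ht1, Set.indicator_of_notMem ht2, hzero, add_zero]
          simp [Real.zero_rpow hq.ne', Real.zero_rpow (q_pos hp).ne']
    have hint : ∫⁻ t, (‖h t‖₊ : ℝ≥0∞) ^ q
        = (ENNReal.ofReal (|a| ^ q) + ENNReal.ofReal (|b| ^ q)) * ENNReal.ofReal η := by
      rw [lintegral_congr hpt,
        lintegral_add_left (Measurable.indicator measurable_const measurableSet_Ioo) _,
        lintegral_indicator measurableSet_Ioo, lintegral_indicator measurableSet_Ioo,
        setLIntegral_const, setLIntegral_const, hvolJ₁, hvolJ₂]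
      ring
    rw [hint]
    have hab : ENNReal.ofReal (|a| ^ q) + ENNReal.ofReal (|b| ^ q) ≤ 1 := by
      rw [← ENNReal.ofReal_add (by positivity) (by positivity)]
      apply ENNReal.ofReal_le_one.2
      have hnv : |a| ^ q + |b| ^ q = ‖v‖ ^ q := (piLp_norm_rpow hp v).symm
      rw [hnv]
      exact Real.rpow_le_one (norm_nonneg _) hv1.le hq.le
    calc ((ENNReal.ofReal (|a| ^ q) + ENNReal.ofReal (|b| ^ q)) * ENNReal.ofReal η) ^ (1/q)
        ≤ (1 * ENNReal.ofReal η) ^ (1/q) := by gcongr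
      _ = ENNReal.ofReal η ^ (1/q) := by rw [one_mul]
  -- put everything together
  set g := hmem.toLp h with hgdef
  have hcoe : ⇑(E g) =ᵐ[volume] awwT s h :=
    (hE g).trans (awwT_congr (MemLp.coeFn_toLp hmem))
  have hEnorm : ‖E g‖ = (eLpNorm (awwT s h) p volume).toReal := by
    rw [Lp.norm_def, eLpNorm_congr_ae hcoe]
  have hfin : eLpNorm (awwT s h) p volume ≠ ∞ := (awwT_memℒp hp hs hrange hsq hmem).2.ne
  have hTlow : ENNReal.ofReal (r ^ q * η) ^ (1/q) ≤ eLpNorm (awwT s h) p volume := by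
    rw [eLpNorm_eq_lintegral_rpow_enorm_toReal hp0 hp]
    exact ENNReal.rpow_le_rpow hintlow (by positivity)
  have hlow2 : r * η ^ (1/q) ≤ ‖E g‖ := by
    rw [hEnorm]
    have hmono := ENNReal.toReal_mono hfin hTlow
    calc r * η ^ (1/q) = (r ^ q * η) ^ (1/q) := by
          rw [Real.mul_rpow (by positivity) hηpos.le, one_div,
            Real.rpow_rpow_inv hr0.le hq.ne']
      _ = (ENNReal.ofReal (r ^ q * η) ^ (1/q)).toReal := by
          rw [← ENNReal.toReal_rpow, ENNReal.toReal_ofReal (by positivity)]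
      _ ≤ _ := hmono
  have hgnorm : ‖g‖ ≤ η ^ (1/q) := by
    rw [hgdef, Lp.norm_toLp]
    calc (eLpNorm h p volume).toReal ≤ (ENNReal.ofReal η ^ (1/q)).toReal :=
        ENNReal.toReal_mono
          (ENNReal.rpow_ne_top_of_nonneg (by positivity) ENNReal.ofReal_ne_top) hnormh
      _ = η ^ (1/q) := by rw [← ENNReal.toReal_rpow, ENNReal.toReal_ofReal hηpos.le]
  have hup : ‖E g‖ ≤ ‖E‖ * η ^ (1/q) :=
    le_trans (E.le_opNorm g) (mul_le_mul_of_nonneg_left hgnorm (norm_nonneg E))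
  have hpow : (0:ℝ) < η ^ (1/q) := Real.rpow_pos_of_pos hηpos _
  have hre : r ≤ ‖E‖ := le_of_mul_le_mul_right (le_trans hlow2 hup) hpow
  linarith

end AWW

/-- The AWW operator `E h t = s(t)² h(t) + s(t)s(-t)h(-t)` is bounded on
`L^p(ℝ)` for `1 ≤ p < ∞`, with operator norm `sup_{ξ ∈ [0,1]} ‖A_ξ‖_{p→p}`. -/
theorem stmt1 (δ : ℝ) (hδ : 0 < δ) (s : ℝ → ℝ) (hs : ContDiff ℝ (⊤ : ℕ∞) s)
    (hrange : ∀ t, s t ∈ Set.Icc (0:ℝ) 1) (hsupp : ∀ t ≤ -δ, s t = 0)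
    (hsq : ∀ t, s t ^ 2 + s (-t) ^ 2 = 1)
    (p : ℝ≥0∞) [Fact (1 ≤ p)] (hp : p ≠ ∞) :
    ∃ E : Lp ℝ p (volume : Measure ℝ) →L[ℝ] Lp ℝ p (volume : Measure ℝ),
      (∀ (h : ℝ → ℝ) (hh : MemLp h p (volume : Measure ℝ)), Continuous h →
        ⇑(E (hh.toLp h)) =ᵐ[volume] fun t => s t ^ 2 * h t + s t * s (-t) * h (-t)) ∧
      ‖E‖ = ⨆ ξ : Set.Icc (0:ℝ) 1, ‖matrixOpLp p (awwMatrix ξ.1)‖ := by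
  haveI : Nonempty (Set.Icc (0:ℝ) 1) := ⟨⟨0, le_rfl, zero_le_one⟩⟩
  refine ⟨AWW.awwE hp hs.continuous hrange hsq, ?_, ?_⟩
  · intro h hh _
    refine (AWW.awwE_coe hp hs.continuous hrange hsq (hh.toLp h)).trans ?_
    exact AWW.awwT_congr (MemLp.coeFn_toLp hh)
  · apply le_antisymm
    · exact AWW.awwE_norm_le hp hs.continuous hrange hsq
    · refine ciSup_le fun ξ => ?_
      exact AWW.lower_bound hp hδ hs.continuous hrange hsupp hsq _
        (AWW.awwE_coe hp hs.continuous hrange hsq) ξ.2
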